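/- Assume the data is of Heisenberg type. Let 1 < p < ∞ with p ≠ Q, and define u(g) = N(g)^{(p−Q)/(p−1)} for g ≠ e. Then for every g ∈ G with g ≠ e one has |Xu(g)|² 𝓛u(g) + (p−2) 𝓛_∞u(g) = 0; in particular, for p ≥ 2 the function u is p-harmonic on G ∖ {e}. -/

import Mathlib

/-!
Away from the identity `u = a ^ β` with `β = (p - Q) / (4 (p - 1))`. Horizontally
`X_v a = 4 ⟪A, v⟫`, so `Xu = 4β a^(β-1) A`, and the symmetrized horizontal Hessian of `u` is
`c₂ ⟪A, w⟫⟪A, v⟫ + c₁ (2 ⟪z, w⟫⟪z, v⟫ + |z|² ⟪w, v⟫ + 2 ⟪[z,v], [z,w]⟫)`: the term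
`⟪[w,v], t⟫` coming from the vertical part is skew and drops out. The H-type identities
`|A|² = |z|² a`, `⟪z, A⟫ = |z|⁴`, `[z, A] = 4|z|² t` and `Σᵢ |[z, eᵢ]|² = k |z|²` turn
`|Xu|² 𝓛u + (p - 2) 𝓛_∞u` into `(4β a^(β-1))³ |z|⁴ a (4β (p - 1) - (p - Q))`, which vanishes
for this `β`.
-/

open scoped RealInnerProductSpace
open MeasureTheory

noncomputable section

variable {V₁ V₂ : Type*} [NormedAddCommGroup V₁] [InnerProductSpace ℝ V₁]
  [NormedAddCommGroup V₂] [InnerProductSpace ℝ V₂]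

/-- The horizontal derivative of `f : V₁ × V₂ → ℝ` at `g = (z,t)` in the horizontal
direction `v ∈ V₁`, namely `Df(g)(v, ½[z,v])`. -/
def Xd (b : V₁ →ₗ[ℝ] V₁ →ₗ[ℝ] V₂) (v : V₁) (f : V₁ × V₂ → ℝ) (g : V₁ × V₂) : ℝ :=
  fderiv ℝ f g (v, (2⁻¹ : ℝ) • b g.1 v)

/-- The horizontal gradient: the unique vector of `V₁` representing the linear functional
`v ↦ X_v f (g)` via the inner product of `V₁`. -/
def Xgrad [FiniteDimensional ℝ V₁] [FiniteDimensional ℝ V₂]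
    (b : V₁ →ₗ[ℝ] V₁ →ₗ[ℝ] V₂) (f : V₁ × V₂ → ℝ) (g : V₁ × V₂) : V₁ :=
  (InnerProductSpace.toDual ℝ V₁).symm
    (LinearMap.toContinuousLinearMap
      ((fderiv ℝ f g).toLinearMap.comp
        (LinearMap.prod LinearMap.id ((2⁻¹ : ℝ) • b g.1))))

/-- The symmetrized second horizontal derivative `f_{,uv} = ½(X_u X_v f + X_v X_u f)`. -/
def X2sym (b : V₁ →ₗ[ℝ] V₁ →ₗ[ℝ] V₂) (u v : V₁) (f : V₁ × V₂ → ℝ) (g : V₁ × V₂) : ℝ :=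
  (Xd b u (Xd b v f) g + Xd b v (Xd b u f) g) / 2

/-- The horizontal (sub-)Laplacian `𝓛 f = Σᵢ X_{eᵢ} X_{eᵢ} f`. -/
def hLap [FiniteDimensional ℝ V₁] (b : V₁ →ₗ[ℝ] V₁ →ₗ[ℝ] V₂) (f : V₁ × V₂ → ℝ)
    (g : V₁ × V₂) : ℝ :=
  ∑ i, Xd b (stdOrthonormalBasis ℝ V₁ i) (Xd b (stdOrthonormalBasis ℝ V₁ i) f) g

/-- The horizontal ∞-Laplacian `𝓛_∞ f = Σ_{i,j} f_{,eᵢeⱼ} X_{eᵢ}f X_{eⱼ}f`. -/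
def hInfLap [FiniteDimensional ℝ V₁] (b : V₁ →ₗ[ℝ] V₁ →ₗ[ℝ] V₂) (f : V₁ × V₂ → ℝ)
    (g : V₁ × V₂) : ℝ :=
  ∑ i, ∑ j, X2sym b (stdOrthonormalBasis ℝ V₁ i) (stdOrthonormalBasis ℝ V₁ j) f g *
    Xd b (stdOrthonormalBasis ℝ V₁ i) f g * Xd b (stdOrthonormalBasis ℝ V₁ j) f g

/-- `ψ(z,t) = |z|²`. -/
def psiF (g : V₁ × V₂) : ℝ := ‖g.1‖ ^ 2

/-- `χ(z,t) = |t|²`. -/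
def chiF (g : V₁ × V₂) : ℝ := ‖g.2‖ ^ 2

/-- `a(z,t) = ψ² + 16χ = |z|⁴ + 16|t|²`. -/
def aF (g : V₁ × V₂) : ℝ := psiF g ^ 2 + 16 * chiF g

/-- The Folland–Kaplan gauge `N = a^{1/4}`. -/
def Ng (g : V₁ × V₂) : ℝ := aF g ^ ((1 : ℝ) / 4)

/-- `A(z,t) = |z|² z + 4 J(t) z`. -/
def Ag (J : V₂ → V₁ →ₗ[ℝ] V₁) (g : V₁ × V₂) : V₁ :=
  ‖g.1‖ ^ 2 • g.1 + (4 : ℝ) • J g.2 g.1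

/-- The group law `(z,t)·(z',t') = (z+z', t+t'+½[z,z'])`. -/
def gmul (b : V₁ →ₗ[ℝ] V₁ →ₗ[ℝ] V₂) (g h : V₁ × V₂) : V₁ × V₂ :=
  (g.1 + h.1, g.2 + h.2 + (2⁻¹ : ℝ) • b g.1 h.1)

/-- The group inverse `(z,t)⁻¹ = (−z,−t)`. -/
def ginv (g : V₁ × V₂) : V₁ × V₂ := (-g.1, -g.2)

end

open Filter Topology

theorem OrthonormalBasis.sum_sum_bilin_mul_inner_mul_inner {E ι : Type*} [NormedAddCommGroup E]
    [InnerProductSpace ℝ E] [Fintype ι] (e : OrthonormalBasis ι ℝ E)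
    (B : E →ₗ[ℝ] E →ₗ[ℝ] ℝ) (x y : E) :
    ∑ i, ∑ j, B (e i) (e j) * ⟪x, e i⟫ * ⟪y, e j⟫ = B x y := by
  conv_rhs => rw [← e.sum_repr' x, ← e.sum_repr' y]
  simp only [map_sum, map_smul, LinearMap.sum_apply, LinearMap.smul_apply, smul_eq_mul,
    Finset.mul_sum, real_inner_comm x, real_inner_comm y]
  rw [Finset.sum_comm]
  exact Finset.sum_congr rfl fun i _ => Finset.sum_congr rfl fun j _ => by ring

section HorizontalCalculus

variable {V₁ V₂ : Type*} [NormedAddCommGroup V₁] [InnerProductSpace ℝ V₁]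
  [NormedAddCommGroup V₂] [InnerProductSpace ℝ V₂]
  (b : V₁ →ₗ[ℝ] V₁ →ₗ[ℝ] V₂) {f f₁ f₂ : V₁ × V₂ → ℝ} {g : V₁ × V₂}

theorem Filter.EventuallyEq.Xd (h : f₁ =ᶠ[𝓝 g] f₂) (v : V₁) :
    Xd b v f₁ =ᶠ[𝓝 g] Xd b v f₂ :=
  h.eventuallyEq_nhds.mono fun _ hx => by simp only [_root_.Xd, hx.fderiv_eq]

theorem Xd_mul (hf₁ : DifferentiableAt ℝ f₁ g) (hf₂ : DifferentiableAt ℝ f₂ g) (v : V₁) :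
    Xd b v (fun x => f₁ x * f₂ x) g = f₁ g * Xd b v f₂ g + f₂ g * Xd b v f₁ g := by
  simp [Xd, fderiv_fun_mul hf₁ hf₂]

theorem Xd_const_mul (hf : DifferentiableAt ℝ f g) (c : ℝ) (v : V₁) :
    Xd b v (fun x => c * f x) g = c * Xd b v f g := by
  simp [Xd, fderiv_const_mul hf]

theorem Xd_rpow_const (hf : DifferentiableAt ℝ f g) (hfg : f g ≠ 0) (β : ℝ) (v : V₁) :
    Xd b v (fun x => f x ^ β) g = β * f g ^ (β - 1) * Xd b v f g := by
  simp [Xd, (hf.hasFDerivAt.rpow_const (Or.inl hfg)).fderiv]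

variable [FiniteDimensional ℝ V₁]

theorem hLap_eq_sum_X2sym (f : V₁ × V₂ → ℝ) (g : V₁ × V₂) :
    hLap b f g = ∑ i, X2sym b (stdOrthonormalBasis ℝ V₁ i) (stdOrthonormalBasis ℝ V₁ i) f g := by
  simp only [hLap, X2sym, add_self_div_two]

theorem Filter.EventuallyEq.hLap_eq (h : f₁ =ᶠ[𝓝 g] f₂) : hLap b f₁ g = hLap b f₂ g := by
  simp only [_root_.hLap, ((h.Xd b _).Xd b _).eq_of_nhds]

theorem Filter.EventuallyEq.hInfLap_eq (h : f₁ =ᶠ[𝓝 g] f₂) :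
    hInfLap b f₁ g = hInfLap b f₂ g := by
  simp only [_root_.hInfLap, X2sym, ((h.Xd b _).Xd b _).eq_of_nhds, (h.Xd b _).eq_of_nhds]

variable [FiniteDimensional ℝ V₂]

theorem inner_Xgrad (f : V₁ × V₂ → ℝ) (g : V₁ × V₂) (v : V₁) :
    ⟪Xgrad b f g, v⟫ = Xd b v f g := by
  simp [Xgrad, Xd, InnerProductSpace.toDual_symm_apply]

theorem Filter.EventuallyEq.Xgrad_eq (h : f₁ =ᶠ[𝓝 g] f₂) : Xgrad b f₁ g = Xgrad b f₂ g := by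
  simp only [_root_.Xgrad, h.fderiv_eq]

theorem hInfLap_eq_bilin (B : V₁ →ₗ[ℝ] V₁ →ₗ[ℝ] ℝ) (hB : ∀ w v, X2sym b w v f g = B w v) :
    hInfLap b f g = B (Xgrad b f g) (Xgrad b f g) := by
  simp_rw [hInfLap, hB, ← inner_Xgrad]
  exact (stdOrthonormalBasis ℝ V₁).sum_sum_bilin_mul_inner_mul_inner B _ _

end HorizontalCalculus

section GaugeNorm

variable {V₁ V₂ : Type*} [NormedAddCommGroup V₁] [NormedAddCommGroup V₂]

theorem aF_nonneg (g : V₁ × V₂) : 0 ≤ aF g := by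
  unfold aF chiF
  positivity

theorem aF_ne_zero {g : V₁ × V₂} (hg : g ≠ 0) : aF g ≠ 0 := by
  intro h
  unfold aF psiF chiF at h
  have h' := (add_eq_zero_iff_of_nonneg (by positivity) (by positivity)).1 h
  simp_all [Prod.ext_iff]

theorem Ng_rpow (γ : ℝ) (g : V₁ × V₂) : Ng g ^ γ = aF g ^ (γ / 4) := by
  rw [Ng, ← Real.rpow_mul (aF_nonneg g)]
  ring_nf

end GaugeNorm

section Gauge

variable {V₁ V₂ : Type*} [NormedAddCommGroup V₁] [InnerProductSpace ℝ V₁]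
  [NormedAddCommGroup V₂] [InnerProductSpace ℝ V₂]
  (b : V₁ →ₗ[ℝ] V₁ →ₗ[ℝ] V₂)

/-- `⟪A(g), v⟫` rewritten through `⟪J t z, v⟫ = ⟪[z,v], t⟫`, so that it can be differentiated
without knowing that `J` is linear. -/
def gaugeCovector (g : V₁ × V₂) (v : V₁) : ℝ :=
  ‖g.1‖ ^ 2 * ⟪g.1, v⟫ + 4 * ⟪b g.1 v, g.2⟫

theorem differentiable_aF : Differentiable ℝ (aF : V₁ × V₂ → ℝ) := fun g =>
  (((hasFDerivAt_fst (p := g)).norm_sq.pow 2).add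
    ((hasFDerivAt_snd (p := g)).norm_sq.const_mul 16)).differentiableAt

theorem Xd_aF (v : V₁) (g : V₁ × V₂) : Xd b v aF g = 4 * gaugeCovector b g v := by
  have h : HasFDerivAt aF _ g := ((hasFDerivAt_fst (p := g)).norm_sq.pow 2).add
    ((hasFDerivAt_snd (p := g)).norm_sq.const_mul 16)
  simp only [Xd, h.fderiv, gaugeCovector, add_apply,
    smul_apply, ContinuousLinearMap.comp_apply, ContinuousLinearMap.coe_fst',
    ContinuousLinearMap.coe_snd', coe_innerSL_apply, smul_eq_mul, nsmul_eq_mul,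
    real_inner_smul_right, real_inner_comm g.2]
  ring

variable [FiniteDimensional ℝ V₁]

theorem Xd_gaugeCovector (v w : V₁) (g : V₁ × V₂) :
    Xd b w (fun x => gaugeCovector b x v) g = 2 * ⟪g.1, w⟫ * ⟪g.1, v⟫ + ‖g.1‖ ^ 2 * ⟪w, v⟫
      + 4 * ⟪b w v, g.2⟫ + 2 * ⟪b g.1 v, b g.1 w⟫ := by
  have hb : HasFDerivAt (fun x : V₁ × V₂ => b x.1 v)
      ((LinearMap.toContinuousLinearMap (b.flip v)).comp (ContinuousLinearMap.fst ℝ V₁ V₂)) g :=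
    (LinearMap.toContinuousLinearMap (b.flip v)).hasFDerivAt.comp g hasFDerivAt_fst
  have h : HasFDerivAt (fun x => gaugeCovector b x v) _ g :=
    ((hasFDerivAt_fst (p := g)).norm_sq.mul ((hasFDerivAt_fst (p := g)).inner ℝ
      (hasFDerivAt_const v g))).add ((hb.inner ℝ (hasFDerivAt_snd (p := g))).const_mul 4)
  simp only [Xd, h.fderiv, add_apply, smul_apply,
    ContinuousLinearMap.comp_apply, ContinuousLinearMap.prod_apply, ContinuousLinearMap.coe_fst',
    ContinuousLinearMap.coe_snd', zero_apply, fderivInnerCLM_apply,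
    coe_innerSL_apply, LinearMap.coe_toContinuousLinearMap', LinearMap.flip_apply,
    inner_zero_right, smul_eq_mul, nsmul_eq_mul, real_inner_smul_right]
  ring

theorem differentiable_gaugeCovector (v : V₁) :
    Differentiable ℝ fun x : V₁ × V₂ => gaugeCovector b x v := by
  have hb : Differentiable ℝ fun x : V₁ × V₂ => b x.1 v :=
    (LinearMap.toContinuousLinearMap (b.flip v)).differentiable.comp differentiable_fst
  exact ((differentiable_fst.norm_sq ℝ).mul
    (differentiable_fst.inner ℝ (differentiable_const v))).add
      ((hb.inner ℝ differentiable_snd).const_mul 4)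

end Gauge

section HType

variable {V₁ V₂ : Type*} [NormedAddCommGroup V₁] [InnerProductSpace ℝ V₁]
  [NormedAddCommGroup V₂] [InnerProductSpace ℝ V₂]
  {b : V₁ →ₗ[ℝ] V₁ →ₗ[ℝ] V₂} {J : V₂ → V₁ →ₗ[ℝ] V₁}

theorem bilin_self_eq_zero (hskew : ∀ z z' : V₁, b z z' = - b z' z) (z : V₁) : b z z = 0 := by
  have h := hskew z z
  rw [eq_neg_iff_add_eq_zero, ← two_smul ℝ] at h
  exact (smul_eq_zero.1 h).resolve_left two_ne_zero

theorem inner_J_self (hskew : ∀ z z' : V₁, b z z' = - b z' z)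
    (hJ : ∀ (t : V₂) (z z' : V₁), ⟪J t z, z'⟫ = ⟪b z z', t⟫) (t : V₂) (z : V₁) :
    ⟪J t z, z⟫ = 0 := by
  rw [hJ, bilin_self_eq_zero hskew, inner_zero_left]

theorem J_add_apply (hJ : ∀ (t : V₂) (z z' : V₁), ⟪J t z, z'⟫ = ⟪b z z', t⟫) (s t : V₂) (z : V₁) :
    J (s + t) z = J s z + J t z :=
  ext_inner_right ℝ fun v => by rw [inner_add_left, hJ, hJ, hJ, inner_add_right]

theorem inner_J_J (hJ : ∀ (t : V₂) (z z' : V₁), ⟪J t z, z'⟫ = ⟪b z z', t⟫)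
    (hH : ∀ (t : V₂) (z : V₁), ‖J t z‖ = ‖t‖ * ‖z‖) (s t : V₂) (z : V₁) :
    ⟪J s z, J t z⟫ = ⟪s, t⟫ * ‖z‖ ^ 2 := by
  have h := norm_add_sq_real (J s z) (J t z)
  rw [← J_add_apply hJ, hH, hH, hH, mul_pow, norm_add_sq_real] at h
  linear_combination (-1 / 2 : ℝ) * h

theorem bilin_J_self (hJ : ∀ (t : V₂) (z z' : V₁), ⟪J t z, z'⟫ = ⟪b z z', t⟫)
    (hH : ∀ (t : V₂) (z : V₁), ‖J t z‖ = ‖t‖ * ‖z‖) (t : V₂) (z : V₁) :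
    b z (J t z) = ‖z‖ ^ 2 • t :=
  ext_inner_right ℝ fun s => by
    rw [← hJ, inner_J_J hJ hH, real_inner_smul_left, real_inner_comm, mul_comm]

theorem sum_norm_bilin_sq [FiniteDimensional ℝ V₂] {ι : Type*} [Fintype ι]
    (hJ : ∀ (t : V₂) (z z' : V₁), ⟪J t z, z'⟫ = ⟪b z z', t⟫)
    (hH : ∀ (t : V₂) (z : V₁), ‖J t z‖ = ‖t‖ * ‖z‖) (e : OrthonormalBasis ι ℝ V₁) (z : V₁) :
    ∑ i, ‖b z (e i)‖ ^ 2 = Module.finrank ℝ V₂ * ‖z‖ ^ 2 := by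
  let f := stdOrthonormalBasis ℝ V₂
  calc ∑ i, ‖b z (e i)‖ ^ 2 = ∑ i, ∑ j, ⟪J (f j) z, e i⟫ ^ 2 := by
        simp_rw [← f.sum_sq_inner_left, hJ]
    _ = ∑ j, ‖J (f j) z‖ ^ 2 := by
        rw [Finset.sum_comm]; simp_rw [e.sum_sq_inner_left]
    _ = Module.finrank ℝ V₂ * ‖z‖ ^ 2 := by simp [hH, f.orthonormal.1]

theorem gaugeCovector_eq_inner_Ag (hJ : ∀ (t : V₂) (z z' : V₁), ⟪J t z, z'⟫ = ⟪b z z', t⟫)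
    (g : V₁ × V₂) (v : V₁) : gaugeCovector b g v = ⟪Ag J g, v⟫ := by
  simp [gaugeCovector, Ag, inner_add_left, real_inner_smul_left, hJ]

theorem inner_fst_Ag (hskew : ∀ z z' : V₁, b z z' = - b z' z)
    (hJ : ∀ (t : V₂) (z z' : V₁), ⟪J t z, z'⟫ = ⟪b z z', t⟫) (g : V₁ × V₂) :
    ⟪g.1, Ag J g⟫ = ‖g.1‖ ^ 4 := by
  rw [Ag, inner_add_right, real_inner_smul_right, real_inner_smul_right,
    real_inner_comm (J g.2 g.1), inner_J_self hskew hJ, real_inner_self_eq_norm_sq]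
  ring

theorem norm_Ag_sq (hskew : ∀ z z' : V₁, b z z' = - b z' z)
    (hJ : ∀ (t : V₂) (z z' : V₁), ⟪J t z, z'⟫ = ⟪b z z', t⟫)
    (hH : ∀ (t : V₂) (z : V₁), ‖J t z‖ = ‖t‖ * ‖z‖) (g : V₁ × V₂) :
    ‖Ag J g‖ ^ 2 = ‖g.1‖ ^ 2 * aF g := by
  rw [Ag, norm_add_sq_real, real_inner_smul_left, real_inner_smul_right,
    real_inner_comm (J g.2 g.1), inner_J_self hskew hJ, norm_smul, norm_smul, hH]
  simp only [aF, psiF, chiF, norm_pow, norm_norm, Real.norm_ofNat]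
  ring

theorem bilin_fst_Ag (hskew : ∀ z z' : V₁, b z z' = - b z' z)
    (hJ : ∀ (t : V₂) (z z' : V₁), ⟪J t z, z'⟫ = ⟪b z z', t⟫)
    (hH : ∀ (t : V₂) (z : V₁), ‖J t z‖ = ‖t‖ * ‖z‖) (g : V₁ × V₂) :
    b g.1 (Ag J g) = (4 * ‖g.1‖ ^ 2) • g.2 := by
  rw [Ag, map_add, map_smul, map_smul, bilin_self_eq_zero hskew, smul_zero, zero_add,
    bilin_J_self hJ hH, smul_smul]

end HType

section RadialPower

variable {V₁ V₂ : Type*} [NormedAddCommGroup V₁] [InnerProductSpace ℝ V₁]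
  [NormedAddCommGroup V₂] [InnerProductSpace ℝ V₂]
  (b : V₁ →ₗ[ℝ] V₁ →ₗ[ℝ] V₂) {g : V₁ × V₂}

theorem Xd_rpow_aF (β : ℝ) (hg : aF g ≠ 0) (v : V₁) :
    Xd b v (fun x => aF x ^ β) g = 4 * β * aF g ^ (β - 1) * gaugeCovector b g v := by
  rw [Xd_rpow_const b (differentiable_aF g) hg, Xd_aF]
  ring

variable [FiniteDimensional ℝ V₁]

theorem Xd_Xd_rpow_aF (β : ℝ) (hg : aF g ≠ 0) (v w : V₁) :
    Xd b w (Xd b v fun x => aF x ^ β) g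
      = 16 * β * (β - 1) * aF g ^ (β - 2) * gaugeCovector b g w * gaugeCovector b g v
        + 4 * β * aF g ^ (β - 1) * (2 * ⟪g.1, w⟫ * ⟪g.1, v⟫ + ‖g.1‖ ^ 2 * ⟪w, v⟫
          + 4 * ⟪b w v, g.2⟫ + 2 * ⟪b g.1 v, b g.1 w⟫) := by
  have hloc : Xd b v (fun x => aF x ^ β)
      =ᶠ[𝓝 g] fun x => 4 * β * aF x ^ (β - 1) * gaugeCovector b x v :=
    (differentiable_aF.continuous.continuousAt.eventually_ne hg).mono
      fun x hx => Xd_rpow_aF b β hx v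
  have hpow : DifferentiableAt ℝ (fun x => aF x ^ (β - 1)) g :=
    (differentiable_aF g).rpow_const (Or.inl hg)
  rw [(hloc.Xd b w).eq_of_nhds, Xd_mul b (hpow.const_mul _) (differentiable_gaugeCovector b v g),
    Xd_const_mul b hpow, Xd_rpow_const b (differentiable_aF g) hg, Xd_aF, Xd_gaugeCovector,
    show β - 1 - 1 = β - 2 by ring]
  ring

theorem X2sym_rpow_aF (hskew : ∀ z z' : V₁, b z z' = - b z' z) (β : ℝ) (hg : aF g ≠ 0)
    (w v : V₁) :
    X2sym b w v (fun x => aF x ^ β) g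
      = 16 * β * (β - 1) * aF g ^ (β - 2) * gaugeCovector b g w * gaugeCovector b g v
        + 4 * β * aF g ^ (β - 1) * (2 * ⟪g.1, w⟫ * ⟪g.1, v⟫ + ‖g.1‖ ^ 2 * ⟪w, v⟫
          + 2 * ⟪b g.1 v, b g.1 w⟫) := by
  rw [X2sym, Xd_Xd_rpow_aF b β hg, Xd_Xd_rpow_aF b β hg, hskew v w, inner_neg_left,
    real_inner_comm v w, real_inner_comm (b g.1 w)]
  ring

theorem hLap_rpow_aF {J : V₂ → V₁ →ₗ[ℝ] V₁} [FiniteDimensional ℝ V₂]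
    (hskew : ∀ z z' : V₁, b z z' = - b z' z)
    (hJ : ∀ (t : V₂) (z z' : V₁), ⟪J t z, z'⟫ = ⟪b z z', t⟫)
    (hH : ∀ (t : V₂) (z : V₁), ‖J t z‖ = ‖t‖ * ‖z‖) (β : ℝ) (hg : aF g ≠ 0) :
    hLap b (fun x => aF x ^ β) g
      = 16 * β * (β - 1) * aF g ^ (β - 2) * ‖Ag J g‖ ^ 2
        + 4 * β * aF g ^ (β - 1)
          * (Module.finrank ℝ V₁ + 2 * Module.finrank ℝ V₂ + 2) * ‖g.1‖ ^ 2 := by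
  set e := stdOrthonormalBasis ℝ V₁
  have hterm : ∀ i, X2sym b (e i) (e i) (fun x => aF x ^ β) g
      = 16 * β * (β - 1) * aF g ^ (β - 2) * ⟪Ag J g, e i⟫ ^ 2
        + 2 * (4 * β * aF g ^ (β - 1)) * ⟪g.1, e i⟫ ^ 2 + 4 * β * aF g ^ (β - 1) * ‖g.1‖ ^ 2
        + 2 * (4 * β * aF g ^ (β - 1)) * ‖b g.1 (e i)‖ ^ 2 := by
    intro i
    rw [X2sym_rpow_aF b hskew β hg, gaugeCovector_eq_inner_Ag hJ, real_inner_self_eq_norm_sq,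
      e.orthonormal.1 i, real_inner_self_eq_norm_sq]
    ring
  rw [hLap_eq_sum_X2sym, Finset.sum_congr rfl fun i _ => hterm i]
  simp only [Finset.sum_add_distrib, ← Finset.mul_sum, e.sum_sq_inner_left,
    sum_norm_bilin_sq hJ hH, Finset.sum_const, Finset.card_univ, Fintype.card_fin, nsmul_eq_mul]
  ring

theorem Xgrad_rpow_aF {J : V₂ → V₁ →ₗ[ℝ] V₁} [FiniteDimensional ℝ V₂]
    (hJ : ∀ (t : V₂) (z z' : V₁), ⟪J t z, z'⟫ = ⟪b z z', t⟫) (β : ℝ) (hg : aF g ≠ 0) :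
    Xgrad b (fun x => aF x ^ β) g = (4 * β * aF g ^ (β - 1)) • Ag J g :=
  ext_inner_right ℝ fun v => by
    rw [inner_Xgrad, Xd_rpow_aF b β hg, real_inner_smul_left, gaugeCovector_eq_inner_Ag hJ]

theorem hInfLap_rpow_aF {J : V₂ → V₁ →ₗ[ℝ] V₁} [FiniteDimensional ℝ V₂]
    (hskew : ∀ z z' : V₁, b z z' = - b z' z)
    (hJ : ∀ (t : V₂) (z z' : V₁), ⟪J t z, z'⟫ = ⟪b z z', t⟫) (β : ℝ) (hg : aF g ≠ 0) :
    hInfLap b (fun x => aF x ^ β) g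
      = (4 * β * aF g ^ (β - 1)) ^ 2 * (16 * β * (β - 1) * aF g ^ (β - 2) * ‖Ag J g‖ ^ 4
        + 4 * β * aF g ^ (β - 1) * (2 * ⟪g.1, Ag J g⟫ ^ 2 + ‖g.1‖ ^ 2 * ‖Ag J g‖ ^ 2
          + 2 * ‖b g.1 (Ag J g)‖ ^ 2)) := by
  let B : V₁ →ₗ[ℝ] V₁ →ₗ[ℝ] ℝ := LinearMap.mk₂ ℝ
    (fun w v => 16 * β * (β - 1) * aF g ^ (β - 2) * ⟪Ag J g, w⟫ * ⟪Ag J g, v⟫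
      + 4 * β * aF g ^ (β - 1) * (2 * ⟪g.1, w⟫ * ⟪g.1, v⟫ + ‖g.1‖ ^ 2 * ⟪w, v⟫
        + 2 * ⟪b g.1 v, b g.1 w⟫))
    (fun _ _ _ => by simp only [inner_add_right, inner_add_left, map_add]; ring)
    (fun _ _ _ => by simp only [real_inner_smul_right, real_inner_smul_left, map_smul]; ring)
    (fun _ _ _ => by simp only [inner_add_right, inner_add_left, map_add]; ring)
    (fun _ _ _ => by simp only [real_inner_smul_right, real_inner_smul_left, map_smul]; ring)
  have hB : ∀ w v, X2sym b w v (fun x => aF x ^ β) g = B w v := fun w v => by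
    rw [X2sym_rpow_aF b hskew β hg, gaugeCovector_eq_inner_Ag hJ, gaugeCovector_eq_inner_Ag hJ]
    rfl
  rw [hInfLap_eq_bilin b B hB, Xgrad_rpow_aF b hJ β hg]
  simp only [B, LinearMap.mk₂_apply]
  simp only [real_inner_smul_right, map_smul, real_inner_self_eq_norm_sq,
    norm_smul, mul_pow, Real.norm_eq_abs, sq_abs]
  ring

theorem pLaplacian_rpow_aF {J : V₂ → V₁ →ₗ[ℝ] V₁} [FiniteDimensional ℝ V₂]
    (hskew : ∀ z z' : V₁, b z z' = - b z' z)
    (hJ : ∀ (t : V₂) (z z' : V₁), ⟪J t z, z'⟫ = ⟪b z z', t⟫)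
    (hH : ∀ (t : V₂) (z : V₁), ‖J t z‖ = ‖t‖ * ‖z‖) (β p : ℝ) (hg : aF g ≠ 0) :
    ‖Xgrad b (fun x => aF x ^ β) g‖ ^ 2 * hLap b (fun x => aF x ^ β) g
        + (p - 2) * hInfLap b (fun x => aF x ^ β) g
      = (4 * β * aF g ^ (β - 1)) ^ 3 * ‖g.1‖ ^ 4 * aF g
        * (4 * β * (p - 1) - p + (Module.finrank ℝ V₁ + 2 * Module.finrank ℝ V₂)) := by
  have hA2 := norm_Ag_sq hskew hJ hH g
  have hA4 : ‖Ag J g‖ ^ 4 = (‖g.1‖ ^ 2 * aF g) ^ 2 := by rw [← hA2]; ring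
  have hpow : aF g ^ (β - 1) = aF g ^ (β - 2) * aF g := by
    rw [← Real.rpow_add_one hg]; ring_nf
  have haF : aF g = ‖g.1‖ ^ 4 + 16 * ‖g.2‖ ^ 2 := by simp only [aF, psiF, chiF]; ring
  rw [Xgrad_rpow_aF b hJ β hg, hLap_rpow_aF b hskew hJ hH β hg, hInfLap_rpow_aF b hskew hJ β hg,
    inner_fst_Ag hskew hJ, bilin_fst_Ag hskew hJ hH]
  simp only [norm_smul, mul_pow, Real.norm_eq_abs, sq_abs, hA2, hA4, hpow]
  linear_combination (-2 * (p - 2) * (4 * β * (aF g ^ (β - 2) * aF g)) ^ 3 * ‖g.1‖ ^ 4) * haF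

end RadialPower

theorem riesz_htype_singular_p_harmonic_general {V₁ V₂ : Type*} [NormedAddCommGroup V₁] [InnerProductSpace ℝ V₁]
    [FiniteDimensional ℝ V₁] [NormedAddCommGroup V₂] [InnerProductSpace ℝ V₂]
    [FiniteDimensional ℝ V₂] (m k : ℕ)
    (hdV₁ : Module.finrank ℝ V₁ = m) (hdV₂ : Module.finrank ℝ V₂ = k)
    (b : V₁ →ₗ[ℝ] V₁ →ₗ[ℝ] V₂) (hskew : ∀ z z' : V₁, b z z' = - b z' z)
    (J : V₂ → V₁ →ₗ[ℝ] V₁) (hJ : ∀ (t : V₂) (z z' : V₁), ⟪J t z, z'⟫ = ⟪b z z', t⟫) (hH : ∀ (t : V₂) (z : V₁), ‖J t z‖ = ‖t‖ * ‖z‖)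
    (p : ℝ) (hp1 : 1 < p)
    (u : V₁ × V₂ → ℝ)
    (hu : ∀ g : V₁ × V₂, g ≠ (0, 0) → u g = Ng g ^ ((p - ((m : ℝ) + 2 * k)) / (p - 1))) :
    ∀ g : V₁ × V₂, g ≠ (0, 0) →
      ‖Xgrad b u g‖ ^ 2 * hLap b u g + (p - 2) * hInfLap b u g = 0 := by
  intro g hg
  set β := (p - ((m : ℝ) + 2 * k)) / (p - 1) / 4 with hβ_def
  have hloc : u =ᶠ[𝓝 g] fun x => aF x ^ β :=
    (eventually_ne_nhds hg).mono fun x hx => by rw [hu x hx, Ng_rpow]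
  have hβ : 4 * β * (p - 1) - p + (m + 2 * k) = 0 := by
    rw [hβ_def]
    field_simp [(sub_pos.2 hp1).ne']
    ring
  rw [hloc.Xgrad_eq, hloc.hLap_eq, hloc.hInfLap_eq,
    pLaplacian_rpow_aF b hskew hJ hH β p (aF_ne_zero (by rwa [← Prod.mk_zero_zero])),
    hdV₁, hdV₂, hβ, mul_zero]

theorem riesz_htype_singular_p_harmonic {V₁ V₂ : Type*} [NormedAddCommGroup V₁] [InnerProductSpace ℝ V₁]
    [FiniteDimensional ℝ V₁] [NormedAddCommGroup V₂] [InnerProductSpace ℝ V₂]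
    [FiniteDimensional ℝ V₂] (m k : ℕ) (hm : 1 ≤ m) (hk : 1 ≤ k)
    (hdV₁ : Module.finrank ℝ V₁ = m) (hdV₂ : Module.finrank ℝ V₂ = k)
    (b : V₁ →ₗ[ℝ] V₁ →ₗ[ℝ] V₂) (hskew : ∀ z z' : V₁, b z z' = - b z' z)
    (J : V₂ → V₁ →ₗ[ℝ] V₁) (hJ : ∀ (t : V₂) (z z' : V₁), ⟪J t z, z'⟫ = ⟪b z z', t⟫) (hH : ∀ (t : V₂) (z : V₁), ‖J t z‖ = ‖t‖ * ‖z‖)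
    (p : ℝ) (hp1 : 1 < p) (hpQ : p ≠ (m : ℝ) + 2 * k)
    (u : V₁ × V₂ → ℝ)
    (hu : ∀ g : V₁ × V₂, g ≠ (0, 0) → u g = Ng g ^ ((p - ((m : ℝ) + 2 * k)) / (p - 1))) :
    ∀ g : V₁ × V₂, g ≠ (0, 0) →
      ‖Xgrad b u g‖ ^ 2 * hLap b u g + (p - 2) * hInfLap b u g = 0 :=
  riesz_htype_singular_p_harmonic_general m k hdV₁ hdV₂ b hskew J hJ hH p hp1 u hu
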